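/- For every simple directed graph G with n > 0 vertices, ¬α_G is a classical tautology if and only if ¬α_G is an intuitionistic theorem (provable in the intuitionistic natural deduction calculus NJ); consequently, G has no Hamiltonian path if and only if ¬α_G is intuitionistically provable. -/

import Mathlib

/-- Propositional formulas over variables `ν`, with `⊥`, `∧`, `∨`, `→`. -/
inductive PF (ν : Type) : Type
  | bot
  | var (x : ν)
  | and (a b : PF ν)
  | or (a b : PF ν)
  | imp (a b : PF ν)
deriving DecidableEq

namespace PF

/-- `¬γ` abbreviates `γ → ⊥`. -/
def neg {ν : Type} (a : PF ν) : PF ν := .imp a .bot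

/-- Classical (Boolean) evaluation, with `⊥` interpreted as false. -/
def evalB {ν : Type} (w : ν → Bool) : PF ν → Bool
  | .bot => false
  | .var x => w x
  | .and a b => a.evalB w && b.evalB w
  | .or a b => a.evalB w || b.evalB w
  | .imp a b => !(a.evalB w) || b.evalB w

end PF

/-- Classical satisfiability. -/
def PFSatisfiable {ν : Type} (a : PF ν) : Prop := ∃ w : ν → Bool, a.evalB w = true

/-- Classical tautologyhood. -/
def PFTautology {ν : Type} (a : PF ν) : Prop := ∀ w : ν → Bool, a.evalB w = true

/-- Conjunction of a list of formulas (the empty conjunction is the truth `⊥ → ⊥`). -/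
def conjList {ν : Type} : List (PF ν) → PF ν
  | [] => .imp .bot .bot
  | [a] => a
  | a :: b :: as => .and a (conjList (b :: as))

/-- Disjunction of a list of formulas (the empty disjunction is `⊥`). -/
def disjList {ν : Type} : List (PF ν) → PF ν
  | [] => .bot
  | [a] => a
  | a :: b :: as => .or a (disjList (b :: as))

/-- The propositional variable `X_{i,v}` : vertex `v` is visited at step `i`. -/
def X {n : ℕ} (i v : Fin n) : PF (Fin n × Fin n) := .var (i, v)

/-- `A` : every vertex is visited. -/
def formA (n : ℕ) : PF (Fin n × Fin n) :=
  conjList ((List.finRange n).map fun v =>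
    disjList ((List.finRange n).map fun i => X i v))

/-- `B` : there are no repetitions. -/
def formB (n : ℕ) : PF (Fin n × Fin n) :=
  conjList ((List.finRange n).map fun v =>
    conjList ((List.finRange n).map fun i =>
      conjList (((List.finRange n).filter fun j => j ≠ i).map fun j =>
        .imp (X i v) (.imp (X j v) .bot))))

/-- `C` : at each step at least one vertex is visited. -/
def formC (n : ℕ) : PF (Fin n × Fin n) :=
  conjList ((List.finRange n).map fun i =>
    disjList ((List.finRange n).map fun v => X i v))

/-- `D` : at each step at most one vertex is visited. -/
def formD (n : ℕ) : PF (Fin n × Fin n) :=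
  conjList ((List.finRange n).map fun v =>
    conjList (((List.finRange n).filter fun w => w ≠ v).map fun w =>
      conjList ((List.finRange n).map fun i =>
        .imp (X i v) (.imp (X i w) .bot))))

/-- `E` : if there is no edge from `v` to `w` then `w` is not visited immediately
after `v`. -/
def formE (n : ℕ) (adj : Fin n → Fin n → Bool) : PF (Fin n × Fin n) :=
  conjList ((List.finRange n).map fun v =>
    conjList (((List.finRange n).filter fun w => ¬ adj v w).map fun w =>
      conjList ((List.finRange (n - 1)).map fun i =>
        .imp (X ⟨i.val, by have := i.isLt; omega⟩ v)
          (.imp (X ⟨i.val + 1, by have := i.isLt; omega⟩ w) .bot))))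

/-- The formula `α_G = A ∧ B ∧ C ∧ D ∧ E` associated with the simple directed graph
`G` on `Fin n` with adjacency `adj`. -/
def alphaG (n : ℕ) (adj : Fin n → Fin n → Bool) : PF (Fin n × Fin n) :=
  .and (formA n) (.and (formB n) (.and (formC n) (.and (formD n) (formE n adj))))

/-- `G` has a Hamiltonian path: a sequence `v₁ … v_n` of vertices such that
`i ↦ vᵢ` is a bijection onto the vertex set and consecutive vertices are adjacent. -/
def HamPath (n : ℕ) (adj : Fin n → Fin n → Bool) : Prop :=
  ∃ v : Fin n → Fin n, Function.Bijective v ∧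
    ∀ (i : ℕ) (h : i + 1 < n), adj (v ⟨i, by omega⟩) (v ⟨i + 1, h⟩) = true

/-- Provability in Prawitz's intuitionistic propositional natural deduction
calculus NJ, from a list of open assumptions. -/
inductive NJ {ν : Type} : List (PF ν) → PF ν → Prop
  | ax {Γ : List (PF ν)} {φ : PF ν} : φ ∈ Γ → NJ Γ φ
  | andI {Γ : List (PF ν)} {a b : PF ν} : NJ Γ a → NJ Γ b → NJ Γ (.and a b)
  | andE1 {Γ : List (PF ν)} {a b : PF ν} : NJ Γ (.and a b) → NJ Γ a
  | andE2 {Γ : List (PF ν)} {a b : PF ν} : NJ Γ (.and a b) → NJ Γ b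
  | orI1 {Γ : List (PF ν)} {a b : PF ν} : NJ Γ a → NJ Γ (.or a b)
  | orI2 {Γ : List (PF ν)} {a b : PF ν} : NJ Γ b → NJ Γ (.or a b)
  | orE {Γ : List (PF ν)} {a b c : PF ν} :
      NJ Γ (.or a b) → NJ (a :: Γ) c → NJ (b :: Γ) c → NJ Γ c
  | impI {Γ : List (PF ν)} {a b : PF ν} : NJ (a :: Γ) b → NJ Γ (.imp a b)
  | impE {Γ : List (PF ν)} {a b : PF ν} : NJ Γ a → NJ Γ (.imp a b) → NJ Γ b
  | botE {Γ : List (PF ν)} {φ : PF ν} : NJ Γ .bot → NJ Γ φ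

/-
Soundness of NJ gives "provable ⇒ tautology", and a Hamiltonian path `v` satisfies `α_G` under
the valuation `X_{i,u} ↦ (vᵢ = u)`, so "tautology ⇒ no Hamiltonian path". To close the cycle,
assume `α_G` and eliminate the disjunctions of `C` step by step: in each of the resulting
branches some vertex `f i` has been chosen at every step `i`. If `f` is not injective, a clause
of `B` refutes the branch; otherwise `f` is a bijection, hence not a Hamiltonian path, and a
clause of `E` refutes it.
-/

variable {ν : Type}

theorem PF.evalB_conjList (w : ν → Bool) :
    ∀ l : List (PF ν), (conjList l).evalB w = l.all (·.evalB w)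
  | [] => rfl
  | [_] => by simp [conjList]
  | a :: b :: as => by simp [conjList, PF.evalB, evalB_conjList w (b :: as)]

theorem PF.evalB_disjList (w : ν → Bool) :
    ∀ l : List (PF ν), (disjList l).evalB w = l.any (·.evalB w)
  | [] => rfl
  | [_] => by simp [disjList]
  | a :: b :: as => by simp [disjList, PF.evalB, evalB_disjList w (b :: as)]

theorem not_satisfiable_of_tautology_neg {a : PF ν} (h : PFTautology a.neg) :
    ¬ PFSatisfiable a := fun ⟨w, hw⟩ => by
  simpa [PF.neg, PF.evalB, hw] using h w

namespace NJ

variable {Γ Δ : List (PF ν)} {a b c φ : PF ν}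

theorem mono (h : NJ Γ φ) (hΓΔ : Γ ⊆ Δ) : NJ Δ φ := by
  induction h generalizing Δ with
  | ax hm => exact ax (hΓΔ hm)
  | andI _ _ ih₁ ih₂ => exact andI (ih₁ hΓΔ) (ih₂ hΓΔ)
  | andE1 _ ih => exact andE1 (ih hΓΔ)
  | andE2 _ ih => exact andE2 (ih hΓΔ)
  | orI1 _ ih => exact orI1 (ih hΓΔ)
  | orI2 _ ih => exact orI2 (ih hΓΔ)
  | orE _ _ _ ih ih₁ ih₂ =>
      exact orE (ih hΓΔ) (ih₁ (List.cons_subset_cons _ hΓΔ)) (ih₂ (List.cons_subset_cons _ hΓΔ))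
  | impI _ ih => exact impI (ih (List.cons_subset_cons _ hΓΔ))
  | impE _ _ ih₁ ih₂ => exact impE (ih₁ hΓΔ) (ih₂ hΓΔ)
  | botE _ ih => exact botE (ih hΓΔ)

theorem sound (h : NJ Γ φ) (w : ν → Bool) (hΓ : ∀ ψ ∈ Γ, ψ.evalB w = true) :
    φ.evalB w = true := by
  induction h with
  | ax hm => exact hΓ _ hm
  | orE _ _ _ ih ih₁ ih₂ =>
      have hab := ih hΓ
      simp only [PF.evalB, Bool.or_eq_true] at hab
      rcases hab with ha | hb
      · exact ih₁ (by simpa [ha] using hΓ)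
      · exact ih₂ (by simpa [hb] using hΓ)
  | @impI _ a _ _ ih =>
      cases ha : a.evalB w
      · simp [PF.evalB, ha]
      · simpa [PF.evalB, ha] using ih (by simpa [ha] using hΓ)
  | _ => simp_all [PF.evalB]

theorem tautology_of_nil (h : NJ [] φ) : PFTautology φ :=
  fun w => h.sound w (by simp)

theorem impE₂ (ha : NJ Γ a) (hb : NJ Γ b) (h : NJ Γ (.imp a (.imp b c))) : NJ Γ c :=
  impE hb (impE ha h)

theorem of_mem_conjList : ∀ {l : List (PF ν)}, NJ Γ (conjList l) → a ∈ l → NJ Γ a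
  | [_], h, ha => List.mem_singleton.mp ha ▸ h
  | _ :: _ :: _, h, ha => by
      rcases List.mem_cons.mp ha with rfl | ha
      · exact andE1 h
      · exact of_mem_conjList (andE2 h) ha

theorem disjList_elim :
    ∀ {Γ l : List (PF ν)}, NJ Γ (disjList l) → (∀ a ∈ l, NJ (a :: Γ) c) → NJ Γ c
  | _, [], h, _ => botE h
  | _, [a], h, hc => impE h (impI (hc a List.mem_cons_self))
  | _, a :: b :: l, h, hc => by
      refine orE h (hc a List.mem_cons_self) (disjList_elim (ax List.mem_cons_self) ?_)
      intro d hd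
      exact (hc d (List.mem_cons_of_mem _ hd)).mono
        (List.cons_subset_cons _ (List.subset_cons_self _ _))

theorem of_disjList_cases :
    ∀ (ds : List (List (PF ν))) {Γ : List (PF ν)}, (∀ d ∈ ds, NJ Γ (disjList d)) →
      (∀ Δ, Γ ⊆ Δ → (∀ d ∈ ds, ∃ a ∈ d, a ∈ Δ) → NJ Δ φ) → NJ Γ φ
  | [], Γ, _, h => h Γ (List.Subset.refl Γ) (by simp)
  | d :: ds, Γ, hdisj, h => by
      refine disjList_elim (hdisj d List.mem_cons_self) fun a ha => ?_
      refine of_disjList_cases ds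
        (fun e he => (hdisj e (List.mem_cons_of_mem _ he)).mono (List.subset_cons_self _ _))
        fun Δ hΔ hds => h Δ (List.Subset.trans (List.subset_cons_self _ _) hΔ) ?_
      rintro e (_ | ⟨_, he⟩)
      exacts [⟨a, ha, hΔ List.mem_cons_self⟩, hds e he]

end NJ

section HamiltonianPath

variable {n : ℕ} {adj : Fin n → Fin n → Bool}

theorem satisfiable_alphaG_of_hamPath (h : HamPath n adj) : PFSatisfiable (alphaG n adj) := by
  obtain ⟨v, ⟨hinj, hsurj⟩, hedge⟩ := h
  refine ⟨fun p => decide (v p.1 = p.2), ?_⟩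
  simp only [alphaG, formA, formB, formC, formD, formE, X, PF.evalB, PF.evalB_conjList,
    PF.evalB_disjList, List.all_map, List.any_map, List.all_filter, Function.comp_def,
    List.all_eq_true, List.any_eq_true, List.mem_finRange, forall_const, true_and,
    Bool.and_eq_true, Bool.or_eq_true, Bool.not_eq_true', Bool.false_eq_true, or_false,
    decide_eq_true_eq, decide_eq_false_iff_not, ← imp_iff_not_or]
  refine ⟨hsurj, fun _ _ _ hji h₁ h₂ => hji (hinj (h₂.trans h₁.symm)), fun i => ⟨v i, rfl⟩,
    fun _ _ hwv _ h₁ h₂ => hwv (h₂.symm.trans h₁), ?_⟩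
  rintro _ _ hnadj i rfl rfl
  exact hnadj (hedge i (by omega))

theorem NJ.formB_clause {Γ : List (PF (Fin n × Fin n))} (h : NJ Γ (formB n)) (v : Fin n)
    {i j : Fin n} (hji : j ≠ i) : NJ Γ (.imp (X i v) (.imp (X j v) .bot)) :=
  of_mem_conjList (of_mem_conjList (of_mem_conjList h (List.mem_map_of_mem (List.mem_finRange v)))
    (List.mem_map_of_mem (List.mem_finRange i)))
    (List.mem_map_of_mem (List.mem_filter.mpr ⟨List.mem_finRange j, by simpa using hji⟩))

theorem NJ.formE_clause {Γ : List (PF (Fin n × Fin n))} (h : NJ Γ (formE n adj)) {v w : Fin n}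
    (hvw : adj v w = false) {i : ℕ} (hi : i + 1 < n) :
    NJ Γ (.imp (X ⟨i, by omega⟩ v) (.imp (X ⟨i + 1, hi⟩ w) .bot)) :=
  of_mem_conjList (of_mem_conjList (of_mem_conjList h (List.mem_map_of_mem (List.mem_finRange v)))
    (List.mem_map_of_mem (List.mem_filter.mpr ⟨List.mem_finRange w, by simp [hvw]⟩)))
    (List.mem_map_of_mem (List.mem_finRange (⟨i, by omega⟩ : Fin (n - 1))))

theorem NJ.bot_of_visits (hnh : ¬ HamPath n adj) {Γ : List (PF (Fin n × Fin n))}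
    (hα : NJ Γ (alphaG n adj)) (f : Fin n → Fin n) (hf : ∀ i, NJ Γ (X i (f i))) :
    NJ Γ .bot := by
  by_cases hinj : f.Injective
  · obtain ⟨i, hi, hadj⟩ : ∃ i, ∃ hi : i + 1 < n,
        adj (f ⟨i, by omega⟩) (f ⟨i + 1, hi⟩) = false := by
      simpa using not_and.mp (not_exists.mp hnh f) (Finite.injective_iff_bijective.mp hinj)
    exact impE₂ (hf _) (hf _) ((andE2 (andE2 (andE2 (andE2 hα)))).formE_clause hadj hi)
  · obtain ⟨i, j, hfij, hij⟩ := Function.not_injective_iff.mp hinj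
    exact impE₂ (hf i) (hfij ▸ hf j) ((andE1 (andE2 hα)).formB_clause (f i) (Ne.symm hij))

theorem NJ.neg_alphaG_of_not_hamPath (hnh : ¬ HamPath n adj) : NJ [] (alphaG n adj).neg := by
  have hα : NJ [alphaG n adj] (alphaG n adj) := ax List.mem_cons_self
  have hC (i : Fin n) : NJ [alphaG n adj] (disjList ((List.finRange n).map (X i))) :=
    of_mem_conjList (andE1 (andE2 (andE2 hα))) (List.mem_map_of_mem (List.mem_finRange i))
  refine impI (of_disjList_cases ((List.finRange n).map fun i => (List.finRange n).map (X i))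
    (by simpa using hC) fun Δ hΔ hvisit => ?_)
  simp only [List.mem_map, List.mem_finRange, true_and, forall_exists_index,
    forall_apply_eq_imp_iff, exists_exists_eq_and] at hvisit
  choose f hf using hvisit
  exact bot_of_visits hnh (hα.mono hΔ) f fun i => ax (hf i)

end HamiltonianPath

theorem negAlphaG_classical_iff_intuitionistic_general (n : ℕ)
    (adj : Fin n → Fin n → Bool) :
    (PFTautology (PF.neg (alphaG n adj)) ↔ NJ [] (PF.neg (alphaG n adj))) ∧
    (¬ HamPath n adj ↔ NJ [] (PF.neg (alphaG n adj))) := by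
  have no_hamPath (h : PFTautology (PF.neg (alphaG n adj))) : ¬ HamPath n adj :=
    fun hp => not_satisfiable_of_tautology_neg h (satisfiable_alphaG_of_hamPath hp)
  exact ⟨⟨fun h => .neg_alphaG_of_not_hamPath (no_hamPath h), NJ.tautology_of_nil⟩,
    ⟨.neg_alphaG_of_not_hamPath, fun h => no_hamPath h.tautology_of_nil⟩⟩

/-- For every simple directed graph `G` with `n > 0` vertices, `¬α_G` is a classical
tautology if and only if `¬α_G` is an intuitionistic theorem (provable in NJ);
consequently, `G` has no Hamiltonian path if and only if `¬α_G` is intuitionistically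
provable. -/
theorem negAlphaG_classical_iff_intuitionistic (n : ℕ) (hn : 0 < n)
    (adj : Fin n → Fin n → Bool) :
    (PFTautology (PF.neg (alphaG n adj)) ↔ NJ [] (PF.neg (alphaG n adj))) ∧
    (¬ HamPath n adj ↔ NJ [] (PF.neg (alphaG n adj))) :=
  negAlphaG_classical_iff_intuitionistic_general n adj
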